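/- arXiv:1404.5383 — 4 statements merged into one kernel-verified Lean document; each statement's English description precedes it below -/
import Mathlib

section
/- If θ_1, …, θ_n are the eigenvalues (with multiplicity) of the normalized signless Laplacian of a graph G with no isolated vertices, then the Randić energy of the subdivision graph satisfies RE(S(G)) = √2 · Σ_{i=1}^n √θ_i. -/
open Matrix BigOperators

variable {V : Type*} [Fintype V] [DecidableEq V]

/-- The Randić matrix of a graph. -/
noncomputable def randicMatrix (G : SimpleGraph V) [DecidableRel G.Adj] : Matrix V V ℝ :=
  Matrix.of fun i j => if G.Adj i j then 1 / Real.sqrt (G.degree i * G.degree j) else 0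

/-- The vertex-edge incidence matrix of a graph. -/
def incMatrix' (G : SimpleGraph V) : Matrix V G.edgeSet ℝ :=
  Matrix.of fun v e => if v ∈ (e : Sym2 V) then 1 else 0

/-- The subdivision graph: new (edge) vertices first, then old vertices. -/
def subdivision (G : SimpleGraph V) : SimpleGraph (G.edgeSet ⊕ V) where
  Adj x y :=
    match x, y with
    | Sum.inl e, Sum.inr v => v ∈ (e : Sym2 V)
    | Sum.inr v, Sum.inl e => v ∈ (e : Sym2 V)
    | _, _ => False
  symm := ⟨by rintro (e | v) (f | w) h <;> simp_all⟩
  loopless := ⟨by rintro (e | v) h <;> simp_all⟩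

instance (G : SimpleGraph V) : DecidableRel (subdivision G).Adj := by
  rintro (e | v) (f | w) <;> simp only [subdivision] <;> infer_instance
/-! The Randić matrix of `S(G)` is the bipartite block matrix `B = [[0, N], [Nᵀ, 0]]` with
`N = Mᵀ / √2`, where `M = D^{-1/2} · (incidence matrix)` satisfies `M Mᵀ = Q`. Hence
`B² = diag(N Nᵀ, Nᵀ N)`, and since `N Nᵀ` and `Nᵀ N = Q / 2` have the same nonzero
eigenvalues, `∑ |λ| = ∑ √(λ²) = 2 ∑ √(θ / 2) = √2 ∑ √θ`. -/

open Polynomial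

namespace Polynomial

/- Summing over the roots of a characteristic polynomial, rather than over
`IsHermitian.eigenvalues`, lets the matrix be rewritten freely. -/
noncomputable def sumSqrtRoots (p : ℝ[X]) : ℝ := (p.roots.map Real.sqrt).sum

lemma sumSqrtRoots_mul {p q : ℝ[X]} (hp : p ≠ 0) (hq : q ≠ 0) :
    (p * q).sumSqrtRoots = p.sumSqrtRoots + q.sumSqrtRoots := by
  simp [sumSqrtRoots, roots_mul (mul_ne_zero hp hq)]

lemma sumSqrtRoots_X_pow_mul {p : ℝ[X]} (hp : p ≠ 0) (n : ℕ) :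
    (X ^ n * p).sumSqrtRoots = p.sumSqrtRoots := by
  rw [sumSqrtRoots_mul (pow_ne_zero n X_ne_zero) hp]
  simp [sumSqrtRoots, Multiset.map_nsmul, Multiset.sum_nsmul]

end Polynomial

namespace Matrix

variable {m n : Type*} [Fintype m] [DecidableEq m] [Fintype n] [DecidableEq n]

lemma sumSqrtRoots_charpoly_mul_comm (A : Matrix m n ℝ) (B : Matrix n m ℝ) :
    (A * B).charpoly.sumSqrtRoots = (B * A).charpoly.sumSqrtRoots := by
  have h := congrArg sumSqrtRoots (charpoly_mul_comm' A B)
  rwa [sumSqrtRoots_X_pow_mul (A * B).charpoly_monic.ne_zero,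
    sumSqrtRoots_X_pow_mul (B * A).charpoly_monic.ne_zero] at h

lemma fromBlocks_zero_sq {R : Type*} [Semiring R] (B : Matrix m n R) (C : Matrix n m R) :
    fromBlocks 0 B C 0 ^ 2 = fromBlocks (B * C) 0 0 (C * B) := by
  simp [sq, fromBlocks_multiply]

namespace IsHermitian

variable {A : Matrix n n ℝ}

lemma roots_charpoly_cfc (hA : A.IsHermitian) (f : ℝ → ℝ) :
    (cfc f A).charpoly.roots = Finset.univ.val.map (f ∘ hA.eigenvalues) := by
  rw [hA.charpoly_cfc_eq, roots_prod _ _ (by simp [Finset.prod_ne_zero_iff, X_sub_C_ne_zero])]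
  simp

lemma sumSqrtRoots_charpoly_sq (hA : A.IsHermitian) :
    (A ^ 2).charpoly.sumSqrtRoots = ∑ i, |hA.eigenvalues i| := by
  rw [← cfc_pow_id (R := ℝ) A 2, sumSqrtRoots, hA.roots_charpoly_cfc]
  simp [Real.sqrt_sq_eq_abs]

lemma sumSqrtRoots_charpoly_smul (hA : A.IsHermitian) {c : ℝ} (hc : 0 ≤ c) :
    (c • A).charpoly.sumSqrtRoots = √c * ∑ i, √(hA.eigenvalues i) := by
  rw [← cfc_const_mul_id (R := ℝ) c A, sumSqrtRoots, hA.roots_charpoly_cfc]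
  simp [Real.sqrt_mul hc, Finset.mul_sum]

end IsHermitian

lemma sumSqrtRoots_charpoly_fromBlocks_zero_sq (N : Matrix m n ℝ) :
    (fromBlocks 0 N Nᵀ 0 ^ 2).charpoly.sumSqrtRoots = 2 * (Nᵀ * N).charpoly.sumSqrtRoots := by
  rw [fromBlocks_zero_sq, charpoly_fromBlocks_zero₁₂,
    sumSqrtRoots_mul (charpoly_monic _).ne_zero (charpoly_monic _).ne_zero,
    sumSqrtRoots_charpoly_mul_comm, two_mul]

end Matrix

open Finset

section Subdivision

variable (G : SimpleGraph V) [DecidableRel G.Adj]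

omit [Fintype V] in
lemma incMatrix'_apply (v : V) (e : G.edgeSet) : incMatrix' G v e = G.incMatrix ℝ v e := by
  simp [incMatrix', SimpleGraph.incMatrix_apply', SimpleGraph.incidenceSet, e.2]

omit [DecidableEq V] in
lemma sum_edgeSet_eq_sum {M : Type*} [AddCommMonoid M] {f : Sym2 V → M}
    (hf : ∀ e ∉ G.edgeSet, f e = 0) :
    ∑ e : G.edgeSet, f e = ∑ e, f e := by
  rw [Finset.sum_set_coe]
  exact Finset.sum_subset (subset_univ _) fun e _ he => hf e (by simpa using he)

lemma incMatrix'_mul_transpose :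
    incMatrix' G * (incMatrix' G)ᵀ = diagonal (fun v => (G.degree v : ℝ)) + G.adjMatrix ℝ := by
  have hsum : incMatrix' G * (incMatrix' G)ᵀ = G.incMatrix ℝ * (G.incMatrix ℝ)ᵀ := by
    ext u v
    simp only [mul_apply, transpose_apply, incMatrix'_apply]
    refine sum_edgeSet_eq_sum G (f := fun e => G.incMatrix ℝ u e * G.incMatrix ℝ v e) ?_
    intro e he
    rw [G.incMatrix_of_notMem_incidenceSet fun h => he h.1, zero_mul]
  rw [hsum, G.incMatrix_mul_transpose]
  ext u v
  by_cases huv : u = v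
  · subst huv; simp
  · simp [huv]

lemma degree_eq_sum_adjMatrix {W : Type*} [Fintype W] (H : SimpleGraph W) [DecidableRel H.Adj]
    (x : W) : (H.degree x : ℝ) = ∑ y, H.adjMatrix ℝ x y := by
  have h := H.adjMatrix_dotProduct x (fun _ => (1 : ℝ))
  simp only [dotProduct, mul_one, sum_const, SimpleGraph.card_neighborFinset_eq_degree,
    nsmul_one] at h
  exact h.symm

omit [Fintype V] [DecidableRel G.Adj] in
lemma adjMatrix_subdivision :
    (subdivision G).adjMatrix ℝ = fromBlocks 0 (incMatrix' G)ᵀ (incMatrix' G) 0 := by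
  ext (e | v) (f | w) <;> rw [SimpleGraph.adjMatrix_apply] <;> simp [subdivision, incMatrix']

lemma subdivision_degree_inl (e : G.edgeSet) : ((subdivision G).degree (.inl e) : ℝ) = 2 := by
  rw [degree_eq_sum_adjMatrix, adjMatrix_subdivision]
  simp [incMatrix'_apply, G.sum_incMatrix_apply_of_mem_edgeSet e.2]

lemma subdivision_degree_inr (v : V) : ((subdivision G).degree (.inr v) : ℝ) = G.degree v := by
  simp only [degree_eq_sum_adjMatrix (subdivision G), adjMatrix_subdivision, Fintype.sum_sum_type,
    fromBlocks_apply₂₁, fromBlocks_apply₂₂, incMatrix'_apply]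
  rw [sum_edgeSet_eq_sum G fun e he => G.incMatrix_of_notMem_incidenceSet fun h => he h.1]
  simp [G.sum_incMatrix_apply]

noncomputable def normalizedIncMatrix : Matrix V G.edgeSet ℝ :=
  diagonal (fun v => (√(G.degree v))⁻¹) * incMatrix' G

lemma one_add_randicMatrix_eq_mul_transpose (hG : ∀ v, 0 < G.degree v) :
    1 + randicMatrix G = normalizedIncMatrix G * (normalizedIncMatrix G)ᵀ := by
  rw [normalizedIncMatrix, transpose_mul, diagonal_transpose, Matrix.mul_assoc,
    ← Matrix.mul_assoc (incMatrix' G), incMatrix'_mul_transpose]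
  ext u v
  by_cases huv : u = v
  · subst huv
    have hu : (0 : ℝ) < G.degree u := by exact_mod_cast hG u
    simp only [randicMatrix, Matrix.add_apply, one_apply_eq, of_apply, SimpleGraph.irrefl,
      if_false, add_zero, diagonal_mul, mul_diagonal, diagonal_apply_eq,
      SimpleGraph.adjMatrix_apply]
    field_simp
    rw [Real.sq_sqrt hu.le]
  · simp [randicMatrix, diagonal_mul, mul_diagonal, huv, SimpleGraph.adjMatrix_apply,
      Real.sqrt_mul (Nat.cast_nonneg _), mul_comm]

lemma randicMatrix_subdivision :
    randicMatrix (subdivision G) = fromBlocks 0 ((√2)⁻¹ • (normalizedIncMatrix G)ᵀ)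
      ((√2)⁻¹ • (normalizedIncMatrix G)ᵀ)ᵀ 0 := by
  ext (e | v) (f | w)
  · simp [randicMatrix, subdivision]
  · have hadj : (subdivision G).Adj (.inl e) (.inr w) ↔ w ∈ (e : Sym2 V) := Iff.rfl
    simp [randicMatrix, subdivision_degree_inl, subdivision_degree_inr, hadj,
      normalizedIncMatrix, mul_diagonal, incMatrix', mul_comm]
  · have hadj : (subdivision G).Adj (.inr v) (.inl f) ↔ v ∈ (f : Sym2 V) := Iff.rfl
    simp [randicMatrix, subdivision_degree_inl, subdivision_degree_inr, hadj,
      normalizedIncMatrix, incMatrix']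
  · simp [randicMatrix, subdivision]

end Subdivision

/-- If `θ_1, …, θ_n` are the eigenvalues (with multiplicity) of the normalized signless
Laplacian `Q = I + R` of a graph `G` with no isolated vertices, then the Randić energy of
the subdivision graph satisfies `RE(S(G)) = √2 · ∑ √θ_i`. -/
theorem randicEnergy_subdivision (G : SimpleGraph V) [DecidableRel G.Adj]
    (hG : ∀ v : V, 0 < G.degree v)
    (hQ : (1 + randicMatrix G).IsHermitian)
    (hR : (randicMatrix (subdivision G)).IsHermitian) :
    ∑ j, |hR.eigenvalues j| = Real.sqrt 2 * ∑ i, Real.sqrt (hQ.eigenvalues i) := by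
  have hN : ((√2)⁻¹ • (normalizedIncMatrix G)ᵀ)ᵀ * ((√2)⁻¹ • (normalizedIncMatrix G)ᵀ)
      = (2⁻¹ : ℝ) • (1 + randicMatrix G) := by
    rw [transpose_smul, transpose_transpose, Matrix.smul_mul, Matrix.mul_smul, smul_smul, ← sq,
      inv_pow, Real.sq_sqrt zero_le_two, one_add_randicMatrix_eq_mul_transpose G hG]
  rw [← hR.sumSqrtRoots_charpoly_sq, randicMatrix_subdivision,
    sumSqrtRoots_charpoly_fromBlocks_zero_sq, hN, hQ.sumSqrtRoots_charpoly_smul (by norm_num),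
    ← mul_assoc]
  congr 1
  rw [Real.sqrt_inv, ← div_eq_mul_inv, Real.div_sqrt]
end

section
/- A connected graph G has exactly two distinct Randić eigenvalues if and only if G is a complete graph. -/
/-! If the spectrum of the (symmetric) Randić matrix `R` is contained in `{a, b}`, the spectral
theorem gives `(R - a)(R - b) = 0`, so for `i ≠ j` the entry `(R²)ᵢⱼ = ∑ₖ Rᵢₖ Rₖⱼ` equals
`(a + b) Rᵢⱼ`. When `i` and `j` are not adjacent this is `0`, and since all entries of `R` are
nonnegative and positive exactly on edges, `i` and `j` have no common neighbour. In a connected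
graph this forces every two distinct vertices to be adjacent. Conversely, for `Kₙ` we have
`R = (J - I)/(n - 1)`, whose eigenvalues are `1` (on constant vectors) and `-1/(n - 1)` (on
vectors with coordinate sum zero); these differ as soon as `n ≥ 2`. -/

open Matrix BigOperators

variable {V : Type*} [Fintype V] [DecidableEq V]

lemma IsSelfAdjoint.sub_mul_sub_eq_zero_iff {A : Type*} [Ring A] [StarRing A] [Algebra ℝ A]
    [TopologicalSpace A] [ContinuousFunctionalCalculus ℝ A IsSelfAdjoint] {a : A}
    (ha : IsSelfAdjoint a) (r s : ℝ) :
    (a - algebraMap ℝ A r) * (a - algebraMap ℝ A s) = 0 ↔ spectrum ℝ a ⊆ {r, s} := by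
  have hcfc : (a - algebraMap ℝ A r) * (a - algebraMap ℝ A s)
      = cfc (fun x => (x - r) * (x - s)) a := by
    rw [cfc_mul _ _ a, cfc_sub _ _ a, cfc_sub _ _ a, cfc_id' ℝ a, cfc_const r a, cfc_const s a]
  rw [hcfc, ← cfc_zero ℝ a, cfc_eq_cfc_iff_eqOn]
  refine forall₂_congr fun x _ => ?_
  simp [sub_eq_zero]

lemma Matrix.mem_spectrum_of_mulVec_eq_smul {n K : Type*} [Fintype n] [DecidableEq n] [Field K]
    {A : Matrix n n K} {μ : K} {v : n → K} (hv : v ≠ 0) (h : A *ᵥ v = μ • v) :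
    μ ∈ spectrum K A := by
  rw [← Matrix.spectrum_toLin', ← Module.End.hasEigenvalue_iff_mem_spectrum]
  exact Module.End.hasEigenvalue_of_hasEigenvector ⟨Module.End.mem_eigenspace_iff.2 h, hv⟩

lemma Matrix.mul_self_apply_eq_zero_of_sub_mul_sub_eq_zero {n R : Type*} [Fintype n]
    [DecidableEq n] [CommRing R] {M : Matrix n n R} {a b : R}
    (h : (M - algebraMap R _ a) * (M - algebraMap R _ b) = 0) {i j : n} (hij : i ≠ j)
    (hM : M i j = 0) : (M * M) i j = 0 := by
  have hsq : M * M = (a + b) • M - algebraMap R _ (a * b) := by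
    rw [← sub_eq_zero, ← h, mul_sub, sub_mul, sub_mul, ← Algebra.commutes b M, Algebra.smul_def,
      map_add, map_mul]
    noncomm_ring
  rw [hsq, sub_apply, smul_apply, algebraMap_matrix_apply, if_neg hij, hM]
  simp

lemma SimpleGraph.Preconnected.eq_top_of_adj_of_adj {α : Type*} {G : SimpleGraph α}
    (hG : G.Preconnected) (h : ∀ ⦃i j k⦄, i ≠ j → G.Adj i k → G.Adj k j → G.Adj i j) :
    G = ⊤ := by
  ext i j
  refine ⟨SimpleGraph.Adj.ne, fun hij => ?_⟩
  obtain ⟨p⟩ := hG i j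
  induction p with
  | nil => exact absurd rfl hij
  | @cons u w x huw p ih =>
    rcases eq_or_ne w x with rfl | hwx
    · exact huw
    · exact h hij huw (ih hwx)

section Randic

variable {W : Type*} [Fintype W] (G : SimpleGraph W) [DecidableRel G.Adj]

lemma isHermitian_randicMatrix : (randicMatrix G).IsHermitian := by
  ext i j
  simp only [randicMatrix, conjTranspose_apply, of_apply, star_trivial, G.adj_comm, mul_comm]

lemma randicMatrix_apply_nonneg (i j : W) : 0 ≤ randicMatrix G i j := by
  simp only [randicMatrix, of_apply]
  split_ifs <;> positivity

variable {G}

lemma randicMatrix_apply_of_not_adj {i j : W} (h : ¬ G.Adj i j) : randicMatrix G i j = 0 :=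
  if_neg h

lemma randicMatrix_apply_pos {i j : W} (h : G.Adj i j) : 0 < randicMatrix G i j := by
  have hi : 0 < G.degree i := G.degree_pos_iff_exists_adj i |>.2 ⟨j, h⟩
  have hj : 0 < G.degree j := G.degree_pos_iff_exists_adj j |>.2 ⟨i, h.symm⟩
  simp only [randicMatrix, of_apply, if_pos h]
  positivity

lemma randicMatrix_mul_self_apply_pos {i j k : W} (hik : G.Adj i k) (hkj : G.Adj k j) :
    0 < (randicMatrix G * randicMatrix G) i j :=
  Finset.sum_pos' (fun l _ => mul_nonneg (randicMatrix_apply_nonneg G i l)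
    (randicMatrix_apply_nonneg G l j))
    ⟨k, Finset.mem_univ k, mul_pos (randicMatrix_apply_pos hik) (randicMatrix_apply_pos hkj)⟩

end Randic

lemma randicMatrix_top_mulVec [DecidableRel (⊤ : SimpleGraph V).Adj] (v : V → ℝ) :
    randicMatrix (⊤ : SimpleGraph V) *ᵥ v = fun i => (∑ j, v j - v i) / (Fintype.card V - 1) := by
  ext i
  have hcard : 1 ≤ Fintype.card V := Fintype.card_pos_iff.2 ⟨i⟩
  have hdeg (j : V) : ((⊤ : SimpleGraph V).degree j : ℝ) = Fintype.card V - 1 := by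
    rw [← Nat.cast_pred hcard]
    exact congrArg Nat.cast (by convert SimpleGraph.complete_graph_degree j)
  have hm : (0 : ℝ) ≤ Fintype.card V - 1 := by rw [← hdeg i]; positivity
  have hterm (j : V) : randicMatrix (⊤ : SimpleGraph V) i j * v j
      = (v j - if i = j then v j else 0) / (Fintype.card V - 1) := by
    simp only [randicMatrix, of_apply, SimpleGraph.top_adj, hdeg, Real.sqrt_mul_self hm]
    split_ifs <;> simp_all [div_eq_inv_mul]
  simp only [mulVec, dotProduct, hterm, ← Finset.sum_div, Finset.sum_sub_distrib,
    Finset.sum_ite_eq, Finset.mem_univ, if_true]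

lemma spectrum_randicMatrix_top [DecidableRel (⊤ : SimpleGraph V).Adj]
    (hn : 2 ≤ Fintype.card V) :
    spectrum ℝ (randicMatrix (⊤ : SimpleGraph V)) = {1, -((Fintype.card V : ℝ) - 1)⁻¹} := by
  set R := randicMatrix (⊤ : SimpleGraph V)
  set m : ℝ := Fintype.card V - 1
  have hR (v : V → ℝ) : R *ᵥ v = fun i => (∑ j, v j - v i) / m := randicMatrix_top_mulVec v
  have hm : m ≠ 0 := by
    have : (2 : ℝ) ≤ Fintype.card V := by exact_mod_cast hn
    linarith
  have hconst (s : ℝ) : R *ᵥ (fun _ => s) = fun _ => s := by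
    ext i
    simp only [hR, Finset.sum_const, Finset.card_univ, nsmul_eq_mul]
    field_simp
    ring
  have hshift (v : V → ℝ) : (R - algebraMap ℝ _ (-m⁻¹)) *ᵥ v = fun _ => (∑ j, v j) / m := by
    ext i
    simp only [sub_mulVec, hR, Algebra.algebraMap_eq_smul_one, smul_mulVec, one_mulVec,
      Pi.sub_apply, Pi.smul_apply, smul_eq_mul]
    field_simp
    ring
  have hann : (R - algebraMap ℝ _ 1) * (R - algebraMap ℝ _ (-m⁻¹)) = 0 := by
    refine ext_iff_mulVec.2 fun v => ?_
    rw [← mulVec_mulVec, hshift, sub_mulVec, hconst, map_one, one_mulVec, sub_self,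
      zero_mulVec]
  refine subset_antisymm
    (((isHermitian_randicMatrix _).isSelfAdjoint.sub_mul_sub_eq_zero_iff _ _).1 hann) ?_
  obtain ⟨x, y, hxy⟩ := Fintype.exists_pair_of_one_lt_card (lt_of_lt_of_le one_lt_two hn)
  rintro μ (rfl | rfl)
  · exact mem_spectrum_of_mulVec_eq_smul (v := fun _ => 1) (Function.ne_iff.2 ⟨x, one_ne_zero⟩)
      (by rw [hconst, one_smul])
  · refine mem_spectrum_of_mulVec_eq_smul (v := Pi.single x 1 - Pi.single y 1)
      (Function.ne_iff.2 ⟨x, by simp [hxy]⟩) ?_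
    ext i
    simp only [hR, Pi.sub_apply, Finset.sum_sub_distrib, Finset.sum_pi_single', Finset.mem_univ,
      if_true, sub_self, zero_sub, neg_sub, Pi.smul_apply, smul_eq_mul, neg_mul]
    ring

lemma eq_top_of_spectrum_randicMatrix_subset_pair {G : SimpleGraph V} [DecidableRel G.Adj]
    (hG : G.Preconnected) {a b : ℝ} (h : spectrum ℝ (randicMatrix G) ⊆ {a, b}) : G = ⊤ := by
  have hann := ((isHermitian_randicMatrix G).isSelfAdjoint.sub_mul_sub_eq_zero_iff a b).2 h
  refine hG.eq_top_of_adj_of_adj fun i j k hij hik hkj => ?_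
  by_contra hnadj
  exact (randicMatrix_mul_self_apply_pos hik hkj).ne' <|
    mul_self_apply_eq_zero_of_sub_mul_sub_eq_zero hann hij (randicMatrix_apply_of_not_adj hnadj)

/-- A connected graph has exactly two distinct Randić eigenvalues iff it is complete. -/
theorem randic_two_distinct_eigenvalues (G : SimpleGraph V) [DecidableRel G.Adj]
    (hn : 2 ≤ Fintype.card V) (hconn : G.Connected) :
    (spectrum ℝ (randicMatrix G)).ncard = 2 ↔ G = ⊤ := by
  constructor
  · intro h
    obtain ⟨a, b, -, hab⟩ := Set.ncard_eq_two.1 h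
    exact eq_top_of_spectrum_randicMatrix_subset_pair hconn.preconnected hab.le
  · rintro rfl
    have hm : 0 < ((Fintype.card V : ℝ) - 1)⁻¹ := by
      have : (2 : ℝ) ≤ Fintype.card V := by exact_mod_cast hn
      exact inv_pos.2 (by linarith)
    rw [spectrum_randicMatrix_top hn, Set.ncard_pair (by linarith)]
end

section
/- The Randić energy of the subdivision of the star S_n on n ≥ 2 vertices equals √2·n + 2 − 2√2. -/
open Matrix BigOperators

variable {V : Type*} [Fintype V] [DecidableEq V]

/-- The star graph on `n` vertices: vertex `0` is adjacent to all others. -/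
def starGraph (n : ℕ) : SimpleGraph (Fin n) where
  Adj i j := i ≠ j ∧ ((i : ℕ) = 0 ∨ (j : ℕ) = 0)
  symm := ⟨by tauto⟩
  loopless := ⟨by tauto⟩

instance (n : ℕ) : DecidableRel (starGraph n).Adj := fun i j =>
  inferInstanceAs (Decidable (i ≠ j ∧ ((i : ℕ) = 0 ∨ (j : ℕ) = 0)))

/-! The subdivision is bipartite between the edges and the vertices of the star, so its Randić
matrix is `R = [[0, B], [Bᵀ, 0]]` with `B e v = [v ∈ e] / √(2 deg v)`, and
`B Bᵀ = (J / (n - 1) + I) / 2` is half the sum of an idempotent and the identity. Hence the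
eigenvalues of `R²` lie in `{0, 1/2, 1}`, i.e. `R⁶ = 3/2 R⁴ - 1/2 R²`. On the roots of this
polynomial `|λ| = (2√2 - 1) λ² + (2 - 2√2) λ⁴`, so the energy is a combination of
`tr R² = n` and `tr R⁴ = (n + 2) / 2`. -/

open Sum Polynomial

theorem abs_eq_of_pow_six {x : ℝ} (hx : x ^ 6 = 3 / 2 * x ^ 4 + -1 / 2 * x ^ 2) :
    |x| = (2 * √2 - 1) * x ^ 2 + (2 - 2 * √2) * x ^ 4 := by
  have hfactor : |x| ^ 2 * (2 * |x| ^ 2 - 1) * (|x| ^ 2 - 1) = 0 := by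
    rw [sq_abs]; linear_combination 2 * hx
  rw [show x ^ 4 = (x ^ 2) ^ 2 by ring, ← sq_abs x]
  have h2 : √2 ^ 2 = 2 := Real.sq_sqrt zero_le_two
  have hx0 := abs_nonneg x
  rcases mul_eq_zero.1 hfactor with h | h
  · rcases mul_eq_zero.1 h with h | h
    · rw [pow_eq_zero_iff two_ne_zero |>.1 h]; ring
    · have hx2 : |x| ^ 2 = 1 / 2 := by linarith
      have : |x| = √2 / 2 := by nlinarith [Real.sqrt_nonneg 2]
      rw [hx2, this]; ring
  · have : |x| = 1 := by nlinarith
    rw [this]; ring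

namespace Matrix.IsHermitian
variable {ι : Type*} [Fintype ι] [DecidableEq ι] {A : Matrix ι ι ℝ}

theorem trace_pow_eq_sum_eigenvalues_pow (hA : A.IsHermitian) (k : ℕ) :
    (A ^ k).trace = ∑ i, hA.eigenvalues i ^ k := by
  rw [← cfc_pow_id (R := ℝ) A k hA.isSelfAdjoint, cfc_eq hA, IsHermitian.cfc,
    Unitary.conjStarAlgAut_apply, trace_mul_cycle, Unitary.coe_star_mul_self, one_mul,
    trace_diagonal]
  simp

theorem eval_eigenvalues_eq_zero (hA : A.IsHermitian) {p : ℝ[X]} (hp : aeval A p = 0)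
    (i : ι) : p.eval (hA.eigenvalues i) = 0 := by
  have : Nontrivial (Matrix ι ι ℝ) := ⟨⟨0, 1, fun h => by simpa using congrFun₂ h i i⟩⟩
  simpa [hp, spectrum.zero_eq] using
    spectrum.subset_polynomial_aeval A p ⟨_, hA.eigenvalues_mem_spectrum_real i, rfl⟩

theorem sum_abs_eigenvalues_eq_of_pow_six (hA : A.IsHermitian)
    (h6 : A ^ 6 = (3 / 2 : ℝ) • A ^ 4 + (-1 / 2 : ℝ) • A ^ 2) :
    ∑ i, |hA.eigenvalues i| = (2 * √2 - 1) * (A ^ 2).trace + (2 - 2 * √2) * (A ^ 4).trace := by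
  have hroot (i : ι) := hA.eval_eigenvalues_eq_zero
    (p := X ^ 6 - (C (3 / 2) * X ^ 4 + C (-1 / 2) * X ^ 2)) (by simp [h6, Algebra.smul_def]) i
  simp only [eval_sub, eval_add, eval_mul, eval_pow, eval_C, eval_X, sub_eq_zero] at hroot
  simp only [abs_eq_of_pow_six (hroot _), hA.trace_pow_eq_sum_eigenvalues_pow,
    Finset.sum_add_distrib, Finset.mul_sum]

end Matrix.IsHermitian

theorem IsIdempotentElem.sq_half_add_one {A : Type*} [Ring A] [Algebra ℝ A] {P : A}
    (hP : IsIdempotentElem P) :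
    ((2 : ℝ)⁻¹ • (P + 1)) ^ 2 = (3 / 2 : ℝ) • ((2 : ℝ)⁻¹ • (P + 1)) + (-1 / 2 : ℝ) • 1 := by
  rw [sq, smul_mul_smul, add_mul, mul_add, mul_add, hP.eq, mul_one, one_mul, mul_one]
  module

namespace Matrix

section AllOnes
variable {ι : Type*} [Fintype ι] [Nonempty ι]

theorem isIdempotentElem_inv_card_smul_of_one :
    IsIdempotentElem ((Fintype.card ι : ℝ)⁻¹ • of fun _ _ : ι => (1 : ℝ)) := by
  ext i j
  simp [mul_apply]

theorem trace_inv_card_smul_of_one :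
    ((Fintype.card ι : ℝ)⁻¹ • of fun _ _ : ι => (1 : ℝ)).trace = 1 := by
  simp [trace]

end AllOnes

section Blocks
variable {m p : Type*} [Fintype m] [Fintype p]

theorem trace_fromBlocks_zero₁₂_zero₂₁ {α : Type*} [AddCommMonoid α] (A : Matrix m m α)
    (D : Matrix p p α) :
    (fromBlocks A 0 0 D).trace = A.trace + D.trace := by
  simp [trace, Fintype.sum_sum_type]

variable [DecidableEq m] [DecidableEq p] {α : Type*} [CommSemiring α]
variable (B : Matrix m p α) (C : Matrix p m α)

theorem fromBlocks_zero₁₁_zero₂₂_sq :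
    fromBlocks 0 B C 0 ^ 2 = fromBlocks (B * C) 0 0 (C * B) := by
  simp [sq, fromBlocks_multiply]

theorem trace_fromBlocks_zero₁₁_zero₂₂_sq :
    (fromBlocks 0 B C 0 ^ 2).trace = 2 * (B * C).trace := by
  rw [fromBlocks_zero₁₁_zero₂₂_sq, trace_fromBlocks_zero₁₂_zero₂₁, trace_mul_comm C, two_mul]

theorem trace_fromBlocks_zero₁₁_zero₂₂_pow_four :
    (fromBlocks 0 B C 0 ^ 4).trace = 2 * ((B * C) ^ 2).trace := by
  rw [show 4 = 2 * 2 from rfl, pow_mul, fromBlocks_zero₁₁_zero₂₂_sq, fromBlocks_diagonal_pow,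
    trace_fromBlocks_zero₁₂_zero₂₁, sq, sq, Matrix.mul_assoc C, trace_mul_comm C, two_mul]
  simp only [Matrix.mul_assoc]

theorem fromBlocks_zero₁₁_zero₂₂_pow_six {a b : α} (h : (B * C) ^ 2 = a • (B * C) + b • 1) :
    fromBlocks 0 B C 0 ^ 6 = a • fromBlocks 0 B C 0 ^ 4 + b • fromBlocks 0 B C 0 ^ 2 := by
  have hBC : (B * C) ^ 3 = a • (B * C) ^ 2 + b • (B * C) := by
    calc (B * C) ^ 3 = (a • (B * C) + b • 1) * (B * C) := by rw [pow_succ, h]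
      _ = a • (B * C) ^ 2 + b • (B * C) := by
        rw [Matrix.add_mul, Matrix.smul_mul, Matrix.smul_mul, Matrix.one_mul, sq]
  have hCB : (C * B) ^ 3 = a • (C * B) ^ 2 + b • (C * B) := by
    calc (C * B) ^ 3 = C * (a • (B * C) + b • 1) * B := by
          simp only [← h, pow_succ, pow_zero, Matrix.one_mul, Matrix.mul_assoc]
      _ = a • (C * B) ^ 2 + b • (C * B) := by
        simp only [Matrix.mul_add, Matrix.add_mul, Matrix.mul_smul, Matrix.smul_mul,
          Matrix.mul_one, sq, Matrix.mul_assoc]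
  rw [show 6 = 2 * 3 from rfl, show 4 = 2 * 2 from rfl, pow_mul, pow_mul,
    fromBlocks_zero₁₁_zero₂₂_sq, fromBlocks_diagonal_pow, fromBlocks_diagonal_pow, hBC, hCB,
    fromBlocks_smul, fromBlocks_smul, fromBlocks_add]
  simp

end Blocks

end Matrix

namespace SimpleGraph

section Adj
variable {W : Type*} (G : SimpleGraph W)

@[simp] theorem subdivision_adj_inl_inr {e : G.edgeSet} {v : W} :
    (subdivision G).Adj (inl e) (inr v) ↔ v ∈ (e : Sym2 W) := Iff.rfl

@[simp] theorem subdivision_adj_inr_inl {e : G.edgeSet} {v : W} :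
    (subdivision G).Adj (inr v) (inl e) ↔ v ∈ (e : Sym2 W) := Iff.rfl

@[simp] theorem not_subdivision_adj_inl_inl {e f : G.edgeSet} :
    ¬(subdivision G).Adj (inl e) (inl f) := id

@[simp] theorem not_subdivision_adj_inr_inr {u v : W} :
    ¬(subdivision G).Adj (inr u) (inr v) := id

end Adj

variable (G : SimpleGraph V) [DecidableRel G.Adj]

theorem degree_subdivision_inl (e : G.edgeSet) : (subdivision G).degree (inl e) = 2 := by
  have : (subdivision G).neighborFinset (inl e) = (e : Sym2 V).toFinset.map .inr := by
    ext (f | v) <;> simp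
  rw [← card_neighborFinset_eq_degree, this, Finset.card_map,
    Sym2.card_toFinset_of_not_isDiag _ (G.not_isDiag_of_mem_edgeSet e.2)]

theorem degree_subdivision_inr (v : V) : (subdivision G).degree (inr v) = G.degree v := by
  have : (subdivision G).neighborFinset (inr v) =
      ((G.incidenceFinset v).subtype (· ∈ G.edgeSet)).map .inl := by
    ext (f | w) <;> simp [incidenceSet]
  rw [← card_neighborFinset_eq_degree, this, Finset.card_map, Finset.card_subtype,
    Finset.filter_true_of_mem fun e he => ((G.mem_incidenceFinset v e).1 he).1,
    card_incidenceFinset_eq_degree]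

noncomputable def subdivisionRandicBlock : Matrix G.edgeSet V ℝ :=
  of fun e v => if v ∈ (e : Sym2 V) then (√(2 * G.degree v))⁻¹ else 0

theorem randicMatrix_subdivision :
    randicMatrix (subdivision G) =
      fromBlocks 0 G.subdivisionRandicBlock G.subdivisionRandicBlockᵀ 0 := by
  ext (e | v) (f | w)
  all_goals simp [randicMatrix, subdivisionRandicBlock, degree_subdivision_inl,
      degree_subdivision_inr]
  rw [mul_comm]

theorem subdivisionRandicBlock_mul_transpose_apply (e f : G.edgeSet) :
    (G.subdivisionRandicBlock * G.subdivisionRandicBlockᵀ) e f =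
      ∑ v with v ∈ (e : Sym2 V) ∧ v ∈ (f : Sym2 V), (2 * G.degree v : ℝ)⁻¹ := by
  simp only [mul_apply, transpose_apply, subdivisionRandicBlock, of_apply, Finset.sum_filter]
  refine Finset.sum_congr rfl fun v _ => ?_
  split_ifs with he hf
  · rw [← mul_inv, Real.mul_self_sqrt (by positivity)]
  all_goals simp_all

end SimpleGraph

namespace starGraph
variable {n : ℕ} [NeZero n]

@[simp] theorem adj_iff {i j : Fin n} : (starGraph n).Adj i j ↔ i ≠ j ∧ (i = 0 ∨ j = 0) := by
  simp [starGraph, Fin.val_eq_zero_iff]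

theorem degree_zero : (starGraph n).degree 0 = n - 1 := by
  have : (starGraph n).neighborFinset 0 = Finset.univ.erase 0 := by
    ext j; simp [eq_comm]
  rw [← SimpleGraph.card_neighborFinset_eq_degree, this,
    Finset.card_erase_of_mem (Finset.mem_univ _), Finset.card_univ, Fintype.card_fin]

theorem degree_of_ne_zero {j : Fin n} (hj : j ≠ 0) : (starGraph n).degree j = 1 := by
  have : (starGraph n).neighborFinset j = {0} := by
    ext i; simp [hj]; rintro rfl; exact hj
  rw [← SimpleGraph.card_neighborFinset_eq_degree, this, Finset.card_singleton]

theorem exists_eq_of_mem_edgeSet {e : Sym2 (Fin n)} (he : e ∈ (starGraph n).edgeSet) :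
    ∃ j ≠ 0, e = s(0, j) := by
  induction e using Sym2.ind with
  | _ i j =>
    obtain ⟨hij, rfl | rfl⟩ := adj_iff.1 he
    · exact ⟨j, hij.symm, rfl⟩
    · exact ⟨i, hij, Sym2.eq_swap⟩

theorem card_edgeSet : Fintype.card (starGraph n).edgeSet = n - 1 := by
  have := (starGraph n).sum_degrees_eq_twice_card_edges
  rw [← Finset.add_sum_erase _ _ (Finset.mem_univ 0), degree_zero,
    Finset.sum_congr rfl fun j hj => degree_of_ne_zero (Finset.ne_of_mem_erase hj),
    Finset.sum_const, Finset.card_erase_of_mem (Finset.mem_univ _), Finset.card_univ,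
    Fintype.card_fin, smul_eq_mul, mul_one, SimpleGraph.edgeFinset_card] at this
  omega

theorem subdivisionRandicBlock_mul_transpose_apply (e f : (starGraph n).edgeSet) :
    ((starGraph n).subdivisionRandicBlock * (starGraph n).subdivisionRandicBlockᵀ) e f =
      (2 * (n - 1 : ℕ) : ℝ)⁻¹ + if e = f then 2⁻¹ else 0 := by
  obtain ⟨_, he⟩ := e
  obtain ⟨_, hf⟩ := f
  obtain ⟨i, hi, rfl⟩ := exists_eq_of_mem_edgeSet he
  obtain ⟨j, hj, rfl⟩ := exists_eq_of_mem_edgeSet hf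
  rw [SimpleGraph.subdivisionRandicBlock_mul_transpose_apply]
  by_cases hij : i = j
  · subst hij
    have : ({v | v ∈ s(0, i) ∧ v ∈ s(0, i)} : Finset (Fin n)) = {0, i} := by ext; simp
    rw [this, Finset.sum_pair hi.symm, degree_zero, degree_of_ne_zero hi]
    simp
  · have : ({v | v ∈ s(0, i) ∧ v ∈ s(0, j)} : Finset (Fin n)) = {0} := by
      ext v; simp; grind
    rw [this, Finset.sum_singleton, degree_zero]
    simp [hij, hi]

theorem subdivisionRandicBlock_mul_transpose :
    (starGraph n).subdivisionRandicBlock * (starGraph n).subdivisionRandicBlockᵀ =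
      (2 : ℝ)⁻¹ • ((Fintype.card (starGraph n).edgeSet : ℝ)⁻¹ • of (fun _ _ => 1) + 1) := by
  ext e f
  rw [subdivisionRandicBlock_mul_transpose_apply, card_edgeSet]
  simp [one_apply, mul_add, mul_comm]

end starGraph

/-- The Randić energy of the subdivision of the star `S_n` (`n ≥ 2`) equals
`√2 n + 2 - 2√2`. -/
theorem randicEnergy_subdivision_star (n : ℕ) (hn : 2 ≤ n)
    (hH : (randicMatrix (subdivision (starGraph n))).IsHermitian) :
    ∑ i, |hH.eigenvalues i| = Real.sqrt 2 * n + 2 - 2 * Real.sqrt 2 := by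
  have : NeZero n := ⟨by omega⟩
  have hcard : (Fintype.card (starGraph n).edgeSet : ℝ) = n - 1 := by
    rw [starGraph.card_edgeSet, Nat.cast_sub (by omega), Nat.cast_one]
  have : Nonempty (starGraph n).edgeSet :=
    Fintype.card_pos_iff.1 (by rw [starGraph.card_edgeSet]; omega)
  set B := (starGraph n).subdivisionRandicBlock
  have hBBt := starGraph.subdivisionRandicBlock_mul_transpose (n := n)
  have hsq : (B * Bᵀ) ^ 2 = (3 / 2 : ℝ) • (B * Bᵀ) + (-1 / 2 : ℝ) • 1 :=
    hBBt ▸ isIdempotentElem_inv_card_smul_of_one.sq_half_add_one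
  have htrace : (B * Bᵀ).trace = n / 2 := by
    rw [hBBt, trace_smul, trace_add, trace_inv_card_smul_of_one, trace_one, hcard, smul_eq_mul]
    ring
  rw [hH.sum_abs_eigenvalues_eq_of_pow_six (by
      rw [SimpleGraph.randicMatrix_subdivision]; exact fromBlocks_zero₁₁_zero₂₂_pow_six _ _ hsq),
    SimpleGraph.randicMatrix_subdivision, trace_fromBlocks_zero₁₁_zero₂₂_sq,
    trace_fromBlocks_zero₁₁_zero₂₂_pow_four, hsq, trace_add, trace_smul, trace_smul, trace_one,
    htrace, hcard, smul_eq_mul, smul_eq_mul]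
  ring
end

section
/- If a connected graph G on n ≥ 3 vertices with m edges has exactly k distinct Randić eigenvalues 1, ρ_2, …, ρ_k, then every column of the matrix H = ∏_{i=2}^k (R − ρ_i I) is a scalar multiple of the vector α = (√d_1, …, √d_n)ᵀ, and in fact H = (∏_{i=2}^k(1−ρ_i)/(2m)) · α αᵀ. -/
/-!
Since `R` is symmetric with spectrum `{1, ρ₂, …, ρ_k}`, the polynomial `(x - 1) ∏ (x - ρ_i)`
annihilates it, so `R H = H` and every column of `H` is a `1`-eigenvector of `R`. For such an
`x`, the vector `y = D^{-1/2} x` satisfies `L y = 0` for the Laplacian `L = D - A`, so `y` is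
constant on the connected graph and `x` is a multiple of `α`. Finally `αᵀ R = αᵀ` gives
`αᵀ H = ∏ (1 - ρ_i) αᵀ`, and `αᵀ α = ∑ d_i = 2m` determines the scalar.
-/

open Matrix BigOperators

variable {V : Type*} [Fintype V] [DecidableEq V]

open Polynomial

theorem Matrix.IsHermitian.aeval_eq_zero_of_forall_eval_eq_zero {n : Type*} [Fintype n]
    [DecidableEq n] {A : Matrix n n ℝ} (hA : A.IsHermitian) {p : ℝ[X]}
    (hp : ∀ μ ∈ spectrum ℝ A, p.eval μ = 0) : aeval A p = 0 := by
  have hdiag : aeval (RCLike.ofReal ∘ hA.eigenvalues : n → ℝ) p = 0 := by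
    ext i
    simpa [aeval_pi_apply] using hp _ (hA.eigenvalues_mem_spectrum_real i)
  rw [hA.spectral_theorem, aeval_algHom_apply, ← diagonalAlgHom_apply ℝ, aeval_algHom_apply,
    hdiag, map_zero, map_zero]

theorem aeval_list_prod_X_sub_C {R A : Type*} [CommRing R] [Ring A] [Algebra R A] (a : A)
    (cs : List R) : aeval a (cs.map fun c => X - C c).prod = (cs.map fun c => a - c • 1).prod := by
  simp [map_list_prod, List.map_map, Function.comp_def, Algebra.algebraMap_eq_smul_one]

theorem Matrix.IsHermitian.mul_list_prod_sub_smul_one_eq_smul {n : Type*} [Fintype n]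
    [DecidableEq n] {A : Matrix n n ℝ} (hA : A.IsHermitian) {μ : ℝ} {cs : List ℝ}
    (hspec : spectrum ℝ A ⊆ insert μ {c | c ∈ cs}) :
    A * (cs.map fun c => A - c • 1).prod = μ • (cs.map fun c => A - c • 1).prod := by
  suffices ((μ :: cs).map fun c => A - c • 1).prod = 0 by
    rwa [List.map_cons, List.prod_cons, sub_mul, smul_mul, one_mul, sub_eq_zero] at this
  rw [← aeval_list_prod_X_sub_C]
  refine hA.aeval_eq_zero_of_forall_eval_eq_zero fun ν hν => ?_
  simp only [eval_list_prod, List.map_map, List.prod_eq_zero_iff, List.mem_map]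
  exact ⟨ν, by simpa using hspec hν, by simp⟩

theorem Matrix.vecMul_list_prod_sub_smul_one {K n : Type*} [CommRing K] [Fintype n]
    [DecidableEq n] {A : Matrix n n K} {α : n → K} {μ : K} (hα : α ᵥ* A = μ • α) (cs : List K) :
    α ᵥ* (cs.map fun c => A - c • 1).prod = (cs.map fun c => μ - c).prod • α := by
  induction cs with
  | nil => simp
  | cons c cs ih =>
    simp only [List.map_cons, List.prod_cons, ← vecMul_vecMul, vecMul_sub, hα, vecMul_smul,
      vecMul_one, ← sub_smul, smul_vecMul, ih, smul_smul]

theorem Matrix.eq_smul_vecMulVec_of_vecMul_eq_smul {K n : Type*} [Field K] [Fintype n]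
    {H : Matrix n n K} {α t : n → K} {c : K} (hcol : ∀ j i, H i j = t j * α i)
    (hrow : α ᵥ* H = c • α) (hα : α ⬝ᵥ α ≠ 0) : H = (c / (α ⬝ᵥ α)) • vecMulVec α α := by
  have ht : ∀ j, t j = c * α j / (α ⬝ᵥ α) := by
    intro j
    rw [eq_div_iff hα, ← smul_eq_mul c, ← Pi.smul_apply c α j, ← hrow]
    simp only [vecMul, dotProduct, hcol, Finset.mul_sum]
    exact Finset.sum_congr rfl fun i _ => by ring
  ext i j
  simp only [hcol, ht, smul_apply, vecMulVec_apply, smul_eq_mul]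
  ring

namespace SimpleGraph

omit [DecidableEq V]

variable (G : SimpleGraph V) [DecidableRel G.Adj]

theorem randicMatrix_isSymm : (randicMatrix G).IsSymm :=
  IsSymm.ext fun i j => by simp [randicMatrix, G.adj_comm, mul_comm]

theorem randicMatrix_mulVec_apply (x : V → ℝ) (i : V) :
    (randicMatrix G *ᵥ x) i =
      (∑ j ∈ G.neighborFinset i, x j / √(G.degree j)) / √(G.degree i) := by
  simp only [mulVec, dotProduct, randicMatrix, of_apply, ite_mul, zero_mul,
    ← Finset.sum_filter, ← neighborFinset_eq_filter, Finset.sum_div]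
  refine Finset.sum_congr rfl fun j _ => ?_
  rw [Real.sqrt_mul (Nat.cast_nonneg _)]
  ring

theorem randicMatrix_mulVec_sqrt_degree :
    randicMatrix G *ᵥ (fun v => √(G.degree v)) = fun v => √(G.degree v) := by
  ext i
  have hnbr : ∀ j ∈ G.neighborFinset i, √(G.degree j) / √(G.degree j) = 1 := fun j hj =>
    div_self (Real.sqrt_ne_zero'.2 (Nat.cast_pos.2 (G.degree_pos_iff_exists_adj j |>.2
      ⟨i, ((G.mem_neighborFinset i j).1 hj).symm⟩)))
  rw [randicMatrix_mulVec_apply, Finset.sum_congr rfl hnbr, Finset.sum_const,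
    card_neighborFinset_eq_degree, nsmul_one, Real.div_sqrt]

theorem sqrt_degree_vecMul_randicMatrix :
    (fun v => √(G.degree v)) ᵥ* randicMatrix G = fun v => √(G.degree v) := by
  rw [← mulVec_transpose, G.randicMatrix_isSymm.eq, randicMatrix_mulVec_sqrt_degree]

theorem sqrt_degree_dotProduct_self :
    (fun v => √(G.degree v)) ⬝ᵥ (fun v => √(G.degree v)) = 2 * G.edgeFinset.card := by
  simp only [dotProduct, Real.mul_self_sqrt (Nat.cast_nonneg _)]
  exact_mod_cast G.sum_degrees_eq_twice_card_edges

theorem Connected.eq_mul_sqrt_degree_of_randicMatrix_mulVec_eq_self {G : SimpleGraph V}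
    [DecidableRel G.Adj] (hconn : G.Connected) {x : V → ℝ} (hx : randicMatrix G *ᵥ x = x) :
    ∃ t : ℝ, ∀ i, x i = t * √(G.degree i) := by
  classical
  set y : V → ℝ := fun v => x v / √(G.degree v)
  have hsum : ∀ i, ∑ j ∈ G.neighborFinset i, y j = G.degree i * y i := by
    intro i
    rcases eq_or_ne (G.degree i) 0 with h0 | h0
    · rw [h0, Finset.card_eq_zero.1 ((G.card_neighborFinset_eq_degree i).trans h0)]
      simp
    · have hxi : x i = (∑ j ∈ G.neighborFinset i, y j) / √(G.degree i) := by
        rw [← randicMatrix_mulVec_apply, hx]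
      have hd : (0 : ℝ) < G.degree i := Nat.cast_pos.2 (Nat.pos_of_ne_zero h0)
      show _ = _ * (x i / _)
      rw [hxi, div_div, Real.mul_self_sqrt hd.le, mul_div_cancel₀ _ hd.ne']
  have hy : ∀ i j, y i = y j := by
    have hL : G.lapMatrix ℝ *ᵥ y = 0 := by
      ext i
      rw [lapMatrix_mulVec_apply, hsum, Pi.zero_apply, sub_self]
    exact fun i j => (lapMatrix_mulVec_eq_zero_iff_forall_reachable G).1 hL i j (hconn i j)
  obtain ⟨v₀⟩ := hconn.nonempty
  refine ⟨y v₀, fun i => ?_⟩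
  rw [← hx, randicMatrix_mulVec_apply, hsum, hy i v₀, mul_comm, mul_div_assoc, Real.div_sqrt]

end SimpleGraph

theorem randic_columns_multiple_of_perron_general (G : SimpleGraph V) [DecidableRel G.Adj]
    (hconn : G.Connected) (hn : 3 ≤ Fintype.card V) (k : ℕ)
    (ρ : Fin (k - 1) → ℝ)
    (hspec : spectrum ℝ (randicMatrix G) = insert (1 : ℝ) (Set.range ρ)) :
    (∀ j : V, ∃ t : ℝ, ∀ i : V,
        ((List.finRange (k - 1)).map
            (fun l => randicMatrix G - ρ l • (1 : Matrix V V ℝ))).prod i j =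
          t * Real.sqrt (G.degree i)) ∧
      ((List.finRange (k - 1)).map
          (fun l => randicMatrix G - ρ l • (1 : Matrix V V ℝ))).prod =
        ((∏ l, (1 - ρ l)) / (2 * G.edgeFinset.card)) •
          Matrix.vecMulVec (fun v => Real.sqrt (G.degree v))
            (fun v => Real.sqrt (G.degree v)) := by
  set cs := (List.finRange (k - 1)).map ρ
  set H := ((List.finRange (k - 1)).map
    (fun l => randicMatrix G - ρ l • (1 : Matrix V V ℝ))).prod with hH
  have hHcs : H = (cs.map fun c => randicMatrix G - c • 1).prod := by rw [hH, List.map_map]; rfl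
  have hRH : randicMatrix G * H = H := by
    have hcs : spectrum ℝ (randicMatrix G) ⊆ insert 1 {c | c ∈ cs} := by
      rw [hspec]
      exact Set.insert_subset_insert fun c ⟨l, hl⟩ => List.mem_map.2 ⟨l, List.mem_finRange l, hl⟩
    simpa [← hHcs] using
      (isHermitian_iff_isSymm.2 G.randicMatrix_isSymm).mul_list_prod_sub_smul_one_eq_smul hcs
  have hcol : ∀ j, ∃ t : ℝ, ∀ i, H i j = t * √(G.degree i) := fun j =>
    hconn.eq_mul_sqrt_degree_of_randicMatrix_mulVec_eq_self
      (funext fun i => congrFun (congrFun hRH i) j)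
  refine ⟨hcol, ?_⟩
  choose t ht using hcol
  have hrow : (fun v => √(G.degree v)) ᵥ* H = (∏ l, (1 - ρ l)) • fun v => √(G.degree v) := by
    rw [hHcs, vecMul_list_prod_sub_smul_one (μ := 1)
      (by rw [one_smul]; exact G.sqrt_degree_vecMul_randicMatrix), Fin.prod_univ_def, List.map_map]
    rfl
  have hm : 0 < G.edgeFinset.card := by
    have := hconn.card_vert_le_card_edgeSet_add_one
    rw [Nat.card_eq_fintype_card, Nat.card_eq_fintype_card, ← SimpleGraph.edgeFinset_card] at this
    omega
  rw [eq_smul_vecMulVec_of_vecMul_eq_smul ht hrow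
    (by rw [G.sqrt_degree_dotProduct_self]; positivity), G.sqrt_degree_dotProduct_self]

/-- If a connected graph `G` on `n ≥ 3` vertices with `m` edges has exactly the `k` distinct
Randić eigenvalues `1, ρ₂, …, ρ_k`, then every column of `H = ∏ (R - ρ_i I)` is a scalar
multiple of `α = (√d_i)`, and in fact `H = (∏ (1 - ρ_i) / (2m)) • α αᵀ`. -/
theorem randic_columns_multiple_of_perron (G : SimpleGraph V) [DecidableRel G.Adj]
    (hconn : G.Connected) (hn : 3 ≤ Fintype.card V) (k : ℕ) (hk2 : 2 ≤ k)
    (ρ : Fin (k - 1) → ℝ) (hinj : Function.Injective ρ) (hne1 : ∀ i, ρ i ≠ 1)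
    (hspec : spectrum ℝ (randicMatrix G) = insert (1 : ℝ) (Set.range ρ)) :
    (∀ j : V, ∃ t : ℝ, ∀ i : V,
        ((List.finRange (k - 1)).map
            (fun l => randicMatrix G - ρ l • (1 : Matrix V V ℝ))).prod i j =
          t * Real.sqrt (G.degree i)) ∧
      ((List.finRange (k - 1)).map
          (fun l => randicMatrix G - ρ l • (1 : Matrix V V ℝ))).prod =
        ((∏ l, (1 - ρ l)) / (2 * G.edgeFinset.card)) •
          Matrix.vecMulVec (fun v => Real.sqrt (G.degree v))
            (fun v => Real.sqrt (G.degree v)) :=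
  randic_columns_multiple_of_perron_general G hconn hn k ρ hspec
end
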